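/- Let Γ be a group with automorphisms α₀, α₁, and let π : V → Aut(LΓ) be the twisted Jones action defined by π_v(a)(vx) = τ_{v,x}(a(x)), where τ_{v,x} = α_{v(I)}^{-1} ∘ α_I for a standard dyadic interval I containing x adapted to v. Then for every finite union of standard dyadic intervals I, the set of a ∈ LΓ commuting (in LΓ ⋊ V) with every element of Fix_V(I) = {v ∈ V : v(x)=x for all x ∈ I} equals L_I Γ · D_{I^c}(Γ^α), i.e., the set of locally constant maps supported in I multiplied by constant maps on the complement of I valued in Γ^α := {g ∈ Γ : g = α₀(g) = α₁(g)}. -/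

import Mathlib

/-! Basic setup: the Cantor space, prefix replacement, Thompson's group `V`,
slopes, dyadic rationals, standard dyadic partitions, locally constant maps,
and the permutation model of the twisted fraction groups `LΓ ⋊ V`. -/

abbrev Cantor : Type := ℕ → Bool

/-- Concatenation of a finite word with an infinite sequence. -/
def cat (w : List Bool) (x : Cantor) : Cantor :=
  fun n => if n < w.length then w.getD n false else x (n - w.length)

/-- The standard dyadic interval (cylinder) associated to a finite word. -/
def cyl (w : List Bool) : Set Cantor := {x | ∃ y : Cantor, x = cat w y}

/-- Membership in Thompson's group `V`: a homeomorphism of the Cantor space which is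
everywhere locally given by prefix replacement. -/
def memV (v : Cantor ≃ₜ Cantor) : Prop :=
  ∀ x : Cantor, ∃ (m w : List Bool) (y : Cantor),
    x = cat m y ∧ ∀ z : Cantor, v (cat m z) = cat w z

/-- `HasLogSlope v x k` : `k = log₂ v'(x)`, base-2 logarithm of the slope of `v` at `x`. -/
def HasLogSlope (v : Cantor ≃ₜ Cantor) (x : Cantor) (k : ℤ) : Prop :=
  ∃ (m w : List Bool) (y : Cantor),
    x = cat m y ∧ (∀ z : Cantor, v (cat m z) = cat w z) ∧
      k = (m.length : ℤ) - (w.length : ℤ)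

open Classical in
noncomputable def logSlope (v : Cantor ≃ₜ Cantor) (x : Cantor) : ℤ :=
  if h : ∃ k : ℤ, HasLogSlope v x k then h.choose else 0

/-- The eventually periodic sequence `c∞ = c·c·c⋯`. -/
def tailSeq (c : List Bool) : Cantor := fun n => c.getD (n % c.length) false

/-- `x` lies in the tail equivalence class of the word `c`, i.e. `x = y·c∞`. -/
def InTailClass (x : Cantor) (c : List Bool) : Prop :=
  ∃ y : List Bool, x = cat y (tailSeq c)

/-- `x` is eventually periodic (a rational point of the Cantor space). -/
def EvPeriodic (x : Cantor) : Prop :=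
  ∃ (y c : List Bool), c ≠ [] ∧ x = cat y (tailSeq c)

/-- A prime word: a nonempty word which is not a proper power of a word. -/
def PrimeWord (c : List Bool) : Prop :=
  c ≠ [] ∧ ∀ (d : List Bool) (k : ℕ), 2 ≤ k → c ≠ (List.replicate k d).flatten

/-- `conjH φ v = φ ∘ v ∘ φ⁻¹`. -/
def conjH (φ v : Cantor ≃ₜ Cantor) : Cantor ≃ₜ Cantor := φ.symm.trans (v.trans φ)

/-- `φ` normalizes Thompson's group `V` inside `Homeo(𝔠)` : `φ V φ⁻¹ = V`. -/
def NormalizesV (φ : Cantor ≃ₜ Cantor) : Prop :=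
  (conjH φ) '' {v | memV v} = {v | memV v}

/-- The copy of the dyadic rationals `Q₂ ⊂ 𝔠` : finitely supported sequences. -/
def InQ2 (x : Cantor) : Prop := ∃ n : ℕ, ∀ m, n ≤ m → x m = false

def zeroSeq : Cantor := fun _ => false

/-- A standard dyadic partition of the Cantor space. -/
def IsSDP (P : Finset (List Bool)) : Prop :=
  ∀ x : Cantor, ∃! w : List Bool, w ∈ P ∧ x ∈ cyl w

/-- Locally constant map: constant on each piece of some standard dyadic partition. -/
def IsLC {Γ : Type*} (f : Cantor → Γ) : Prop :=
  ∃ P : Finset (List Bool), IsSDP P ∧ ∀ w ∈ P, ∀ y z : Cantor, f (cat w y) = f (cat w z)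

/-- `h` agrees on `Q₂` with (the restriction of) a locally constant map. -/
def AgreesOnQ2WithLC {Γ : Type*} (h : Cantor → Γ) : Prop :=
  ∃ b : Cantor → Γ, IsLC b ∧ ∀ x, InQ2 x → h x = b x

section GroupPart
variable {Γ : Type*} [Group Γ]

/-- `alphaWord α₀ α₁ (m₁⋯m_k) = α_{m_k} ∘ ⋯ ∘ α_{m₁}`. -/
def alphaWord (α₀ α₁ : Γ ≃* Γ) (m : List Bool) : Γ ≃* Γ :=
  m.foldl (fun acc b => acc.trans (if b then α₁ else α₀)) (MulEquiv.refl Γ)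

open Classical in
/-- The twisting automorphism `τ_{v,x} = α_{v(I)}⁻¹ ∘ α_I` for a standard dyadic
interval `I` containing `x` and adapted to `v`. -/
noncomputable def tauEquiv (α₀ α₁ : Γ ≃* Γ) (v : Cantor ≃ₜ Cantor) (x : Cantor) : Γ ≃* Γ :=
  if h : ∃ p : List Bool × List Bool, x ∈ cyl p.1 ∧ ∀ z : Cantor, v (cat p.1 z) = cat p.2 z
  then (alphaWord α₀ α₁ h.choose.1).trans (alphaWord α₀ α₁ h.choose.2).symm
  else MulEquiv.refl Γ

/-- The element `a·v` of the twisted `LΓ ⋊ V`, realized as the permutation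
`(x,g) ↦ (v x, a(v x) · τ_{v,x}(g))` of `𝔠 × Γ`. -/
noncomputable def permOf (α₀ α₁ : Γ ≃* Γ) (a : Cantor → Γ) (v : Cantor ≃ₜ Cantor) :
    Equiv.Perm (Cantor × Γ) where
  toFun p := (v p.1, a (v p.1) * tauEquiv α₀ α₁ v p.1 p.2)
  invFun p := (v.symm p.1, (tauEquiv α₀ α₁ v (v.symm p.1)).symm ((a p.1)⁻¹ * p.2))
  left_inv := by rintro ⟨x, g⟩; simp
  right_inv := by rintro ⟨x, g⟩; simp

end GroupPart

/-- The twisted fraction group `G = LΓ ⋊ V` of the triple `(Γ, α₀, α₁)`,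
as a group of permutations of `𝔠 × Γ`. -/
noncomputable def Gsub (Γ : Type*) [Group Γ] (α₀ α₁ : Γ ≃* Γ) :
    Subgroup (Equiv.Perm (Cantor × Γ)) :=
  Subgroup.closure {p | ∃ a v, IsLC a ∧ memV v ∧ p = permOf α₀ α₁ a v}

/-- The untwisted case `α₀ = α₁ = id`. -/
noncomputable def permOfU {Γ : Type*} [Group Γ] (a : Cantor → Γ) (v : Cantor ≃ₜ Cantor) :=
  permOf (MulEquiv.refl Γ) (MulEquiv.refl Γ) a v

/-- The untwisted fraction group `G = LΓ ⋊ V`. -/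
noncomputable def GsubU (Γ : Type*) [Group Γ] := Gsub Γ (MulEquiv.refl Γ) (MulEquiv.refl Γ)

/-- `f ∈ N_{K̄}(G)` : the element `f` of `K̄ = ∏_{Q₂}Γ` normalizes `G = LΓ ⋊ V`
(untwisted case), i.e. `f·a·(f^v)⁻¹` and `f⁻¹·a·f^v` are locally constant on `Q₂`. -/
def InNormKbar {Γ : Type*} [Group Γ] (f : Cantor → Γ) : Prop :=
  ∀ (a : Cantor → Γ) (v : Cantor ≃ₜ Cantor), IsLC a → memV v →
    AgreesOnQ2WithLC (fun x => f x * a x * (f (v.symm x))⁻¹) ∧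
    AgreesOnQ2WithLC (fun x => (f x)⁻¹ * a x * f (v.symm x))

/-! Commuting with `permOf α₀ α₁ 1 v` means `a (v x) = τ_{v,x} (a x)` for all `x`. Off `I` the map
`a` is constant on every small enough cylinder, and two disjoint such cylinders `m₁`, `m₂` are
exchanged by an element of `Fix_V(I)`, which forces `α_{m₁}` and `α_{m₂}` to agree on the values
of `a` there. Inside a cylinder `u` on which `a ≡ g`, exchanging `u0` with `u1` and `u00` with `u1`
gives `α₁ h = α₀ h = α₀ (α₀ h)` for `h = α_u g`; so `h` is fixed by `α₀` and `α₁`, hence by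
`α_u`, and `g = h`. One more exchange shows that all these values of `a` agree.
Conversely, for `v ∈ Fix_V(I)` the twist `τ_{v,x}` is trivial on `I`, where `v` is locally the
identity, and fixes `Γ^α` pointwise off `I`. -/

namespace Cantor

def drop (k : ℕ) (x : Cantor) : Cantor := fun n => x (n + k)

def pref (x : Cantor) (n : ℕ) : List Bool := List.ofFn fun i : Fin n => x i

theorem cat_apply_of_lt {w : List Bool} (z : Cantor) {n : ℕ} (h : n < w.length) :
    cat w z n = w.getD n false := if_pos h

theorem cat_apply_of_le {w : List Bool} (z : Cantor) {n : ℕ} (h : w.length ≤ n) :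
    cat w z n = z (n - w.length) := if_neg (by omega)

theorem drop_cat (w : List Bool) (z : Cantor) : drop w.length (cat w z) = z := by
  funext n
  rw [drop, cat_apply_of_le z (Nat.le_add_left _ _), Nat.add_sub_cancel]

theorem cat_mem_cyl (w : List Bool) (z : Cantor) : cat w z ∈ cyl w := ⟨z, rfl⟩

theorem cat_drop {w : List Bool} {x : Cantor} (h : x ∈ cyl w) : cat w (drop w.length x) = x := by
  obtain ⟨z, rfl⟩ := h
  rw [drop_cat]

theorem mem_cyl_iff {w : List Bool} {x : Cantor} :
    x ∈ cyl w ↔ ∀ i < w.length, x i = w.getD i false := by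
  refine ⟨?_, fun h => ⟨drop w.length x, funext fun n => ?_⟩⟩
  · rintro ⟨z, rfl⟩ i hi
    exact cat_apply_of_lt z hi
  · by_cases hn : n < w.length
    · rw [cat_apply_of_lt _ hn, h n hn]
    · rw [cat_apply_of_le _ (by omega), drop, Nat.sub_add_cancel (by omega)]

theorem cat_append (m s : List Bool) (z : Cantor) : cat m (cat s z) = cat (m ++ s) z := by
  funext n
  by_cases h₁ : n < m.length
  · rw [cat_apply_of_lt _ h₁, cat_apply_of_lt _ (by simp; omega), List.getD_append _ _ _ _ h₁]
  by_cases h₂ : n - m.length < s.length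
  · rw [cat_apply_of_le _ (by omega), cat_apply_of_lt _ h₂, cat_apply_of_lt _ (by simp; omega),
      List.getD_append_right _ _ _ _ (by omega)]
  · rw [cat_apply_of_le _ (by omega), cat_apply_of_le _ (by omega),
      cat_apply_of_le _ (by simp; omega), List.length_append, Nat.sub_add_eq]

theorem eq_of_forall_cat_eq {m w : List Bool} (h : ∀ z, cat m z = cat w z) : m = w := by
  wlog hle : m.length ≤ w.length generalizing m w
  · exact (this (fun z => (h z).symm) (by omega)).symm
  have hlen : m.length = w.length := by
    refine le_antisymm hle (not_lt.1 fun hlt => ?_)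
    have := congrFun (h fun _ => !w.getD m.length false) m.length
    rw [cat_apply_of_le _ le_rfl, cat_apply_of_lt _ hlt] at this
    exact Bool.not_ne_self _ this
  refine List.ext_getElem hlen fun i h₁ h₂ => ?_
  have := congrFun (h zeroSeq) i
  rwa [cat_apply_of_lt _ h₁, cat_apply_of_lt _ h₂, List.getD_eq_getElem _ _ h₁,
    List.getD_eq_getElem _ _ h₂] at this

theorem isPrefix_of_mem_cyl {m t : List Bool} {x : Cantor} (hm : x ∈ cyl m) (ht : x ∈ cyl t)
    (hle : m.length ≤ t.length) : m <+: t := by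
  rw [List.prefix_iff_eq_take]
  refine List.ext_getElem (by simp [hle]) fun i h₁ h₂ => ?_
  have := (mem_cyl_iff.1 hm i h₁).symm.trans (mem_cyl_iff.1 ht i (by omega))
  rwa [List.getElem_take, ← List.getD_eq_getElem _ false, ← List.getD_eq_getElem _ false]

theorem cyl_subset_of_isPrefix {m t : List Bool} (h : m <+: t) : cyl t ⊆ cyl m := by
  obtain ⟨s, rfl⟩ := h
  rintro _ ⟨z, rfl⟩
  exact ⟨cat s z, (cat_append m s z).symm⟩

theorem disjoint_cyl {m t : List Bool} (hmt : ¬ m <+: t) (htm : ¬ t <+: m) :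
    Disjoint (cyl m) (cyl t) := by
  refine Set.disjoint_left.2 fun x hm ht => ?_
  rcases le_total m.length t.length with h | h
  exacts [hmt (isPrefix_of_mem_cyl hm ht h), htm (isPrefix_of_mem_cyl ht hm h)]

@[simp] theorem length_pref (x : Cantor) (n : ℕ) : (pref x n).length = n := List.length_ofFn

theorem mem_cyl_pref {x y : Cantor} {n : ℕ} : y ∈ cyl (pref x n) ↔ ∀ i < n, y i = x i := by
  rw [mem_cyl_iff, length_pref]
  refine forall₂_congr fun i hi => ?_
  rw [List.getD_eq_getElem _ _ (by simpa using hi)]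
  simp [pref]

theorem mem_cyl_pref_self (x : Cantor) (n : ℕ) : x ∈ cyl (pref x n) :=
  mem_cyl_pref.2 fun _ _ => rfl

section DependsOnFirst

variable {β : Type*}

def DependsOnFirst (N : ℕ) (f : Cantor → β) : Prop :=
  ∀ x y : Cantor, (∀ i < N, x i = y i) → f x = f y

theorem DependsOnFirst.mono {N M : ℕ} {f : Cantor → β} (h : DependsOnFirst N f)
    (hNM : N ≤ M) : DependsOnFirst M f :=
  fun x y hxy => h x y fun i hi => hxy i (by omega)

theorem DependsOnFirst.apply_eq_of_mem_cyl_pref {N : ℕ} {f : Cantor → β}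
    (h : DependsOnFirst N f) {x y : Cantor} (hy : y ∈ cyl (pref x N)) : f y = f x :=
  h y x (mem_cyl_pref.1 hy)

theorem dependsOnFirst_mem_cyl (w : List Bool) : DependsOnFirst w.length (· ∈ cyl w) :=
  fun x y hxy => propext <| by
    simp only [mem_cyl_iff]
    exact forall₂_congr fun i hi => by rw [hxy i hi]

theorem dependsOnFirst_mem_biUnion_cyl {P : Finset (List Bool)} {N : ℕ}
    (hN : ∀ w ∈ P, w.length ≤ N) : DependsOnFirst N (· ∈ ⋃ w ∈ P, cyl w) :=
  fun x y hxy => propext <| by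
    simp only [Set.mem_iUnion₂]
    exact exists₂_congr fun w hw =>
      eq_iff_iff.1 ((dependsOnFirst_mem_cyl w).mono (hN w hw) x y hxy)

theorem _root_.IsLC.exists_dependsOnFirst {f : Cantor → β} (hf : IsLC f) :
    ∃ N, DependsOnFirst N f := by
  obtain ⟨Q, hQ, hconst⟩ := hf
  refine ⟨Q.sup List.length, fun x y hxy => ?_⟩
  obtain ⟨q, ⟨hq, hxq⟩, -⟩ := hQ x
  have hyq : y ∈ cyl q :=
    (dependsOnFirst_mem_cyl q).mono (Finset.le_sup (f := List.length) hq) x y hxy ▸ hxq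
  rw [← cat_drop hxq, ← cat_drop hyq]
  exact hconst q hq _ _

end DependsOnFirst

theorem isOpen_cyl (w : List Bool) : IsOpen (cyl w) := by
  have : cyl w = (fun x : Cantor => fun i : Fin w.length => x i) ⁻¹'
      {fun i : Fin w.length => w.getD i false} := by
    ext x
    simp only [mem_cyl_iff, Set.mem_preimage, Set.mem_singleton_iff, funext_iff, Fin.forall_iff]
  rw [this]
  exact (isOpen_discrete _).preimage (by fun_prop)

theorem continuous_cat (w : List Bool) : Continuous (cat w) :=
  continuous_pi fun n => by
    unfold cat
    split_ifs <;> fun_prop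

theorem continuous_drop (k : ℕ) : Continuous (drop k) :=
  continuous_pi fun _ => continuous_apply _

theorem continuous_of_locally_cat {g : Cantor → Cantor}
    (hg : ∀ x, ∃ (m w : List Bool) (y : Cantor), x = cat m y ∧ ∀ z, g (cat m z) = cat w z) :
    Continuous g := by
  refine continuous_iff_continuousAt.2 fun x => ?_
  obtain ⟨m, w, y, rfl, hmw⟩ := hg x
  have : (fun x => cat w (drop m.length x)) =ᶠ[nhds (cat m y)] g := by
    filter_upwards [(isOpen_cyl m).mem_nhds (cat_mem_cyl m y)] with x hx
    rw [← hmw, cat_drop hx]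
  exact ((continuous_cat w).comp (continuous_drop _)).continuousAt.congr this

open Classical in
noncomputable def swapCyl (m w : List Bool) (x : Cantor) : Cantor :=
  if x ∈ cyl m then cat w (drop m.length x)
  else if x ∈ cyl w then cat m (drop w.length x) else x

theorem swapCyl_cat_left (m w : List Bool) (z : Cantor) : swapCyl m w (cat m z) = cat w z := by
  rw [swapCyl, if_pos (cat_mem_cyl m z), drop_cat]

theorem swapCyl_cat_right {m w : List Bool} (h : Disjoint (cyl m) (cyl w)) (z : Cantor) :
    swapCyl m w (cat w z) = cat m z := by
  rw [swapCyl, if_neg (Set.disjoint_right.1 h (cat_mem_cyl w z)), if_pos (cat_mem_cyl w z),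
    drop_cat]

theorem swapCyl_of_notMem {m w : List Bool} {x : Cantor} (hm : x ∉ cyl m) (hw : x ∉ cyl w) :
    swapCyl m w x = x := by
  rw [swapCyl, if_neg hm, if_neg hw]

theorem swapCyl_involutive {m w : List Bool} (h : Disjoint (cyl m) (cyl w)) :
    Function.Involutive (swapCyl m w) := by
  intro x
  by_cases hm : x ∈ cyl m
  · rw [← cat_drop hm, swapCyl_cat_left, swapCyl_cat_right h]
  by_cases hw : x ∈ cyl w
  · rw [← cat_drop hw, swapCyl_cat_right h, swapCyl_cat_left]
  rw [swapCyl_of_notMem hm hw, swapCyl_of_notMem hm hw]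

theorem swapCyl_locally_cat {m w : List Bool} (h : Disjoint (cyl m) (cyl w)) (x : Cantor) :
    ∃ (m' w' : List Bool) (y : Cantor), x = cat m' y ∧ ∀ z, swapCyl m w (cat m' z) = cat w' z := by
  by_cases hm : x ∈ cyl m
  · exact ⟨m, w, _, (cat_drop hm).symm, swapCyl_cat_left m w⟩
  by_cases hw : x ∈ cyl w
  · exact ⟨w, m, _, (cat_drop hw).symm, swapCyl_cat_right h⟩
  set N := max m.length w.length
  refine ⟨pref x N, pref x N, _, (cat_drop (mem_cyl_pref_self x N)).symm, fun z => ?_⟩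
  have hxz := cat_mem_cyl (pref x N) z
  refine swapCyl_of_notMem (fun hz => hm ?_) (fun hz => hw ?_)
  · exact ((dependsOnFirst_mem_cyl m).mono (le_max_left _ _)).apply_eq_of_mem_cyl_pref hxz ▸ hz
  · exact ((dependsOnFirst_mem_cyl w).mono (le_max_right _ _)).apply_eq_of_mem_cyl_pref hxz ▸ hz

noncomputable def swapCylHomeo {m w : List Bool} (h : Disjoint (cyl m) (cyl w)) :
    Cantor ≃ₜ Cantor where
  toEquiv := (swapCyl_involutive h).toPerm
  continuous_toFun := continuous_of_locally_cat (swapCyl_locally_cat h)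
  continuous_invFun := continuous_of_locally_cat (swapCyl_locally_cat h)

theorem swapCylHomeo_apply {m w : List Bool} (h : Disjoint (cyl m) (cyl w)) (x : Cantor) :
    swapCylHomeo h x = swapCyl m w x := rfl

theorem memV_swapCylHomeo {m w : List Bool} (h : Disjoint (cyl m) (cyl w)) :
    memV (swapCylHomeo h) :=
  swapCyl_locally_cat h

end Cantor

open Cantor

section Twist

variable {Γ : Type*} [Group Γ] (α₀ α₁ : Γ ≃* Γ)

theorem alphaWord_append (m s : List Bool) :
    alphaWord α₀ α₁ (m ++ s) = (alphaWord α₀ α₁ m).trans (alphaWord α₀ α₁ s) := by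
  suffices h : ∀ e : Γ ≃* Γ,
      s.foldl (fun acc b => acc.trans (if b then α₁ else α₀)) e = e.trans (alphaWord α₀ α₁ s) by
    rw [alphaWord, List.foldl_append, h]
    rfl
  induction s with
  | nil => intro e; rfl
  | cons b s ih =>
    intro e
    have hbs : alphaWord α₀ α₁ (b :: s)
        = ((MulEquiv.refl Γ).trans (if b then α₁ else α₀)).trans (alphaWord α₀ α₁ s) := ih _
    rw [List.foldl_cons, ih, hbs]
    rfl

theorem alphaWord_singleton (b : Bool) :
    alphaWord α₀ α₁ [b] = if b then α₁ else α₀ := by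
  cases b <;> rfl

theorem alphaWord_apply_of_fixed {g : Γ} (h₀ : α₀ g = g) (h₁ : α₁ g = g) (w : List Bool) :
    alphaWord α₀ α₁ w g = g := by
  induction w with
  | nil => rfl
  | cons b s ih =>
    rw [← List.singleton_append, alphaWord_append, MulEquiv.trans_apply, alphaWord_singleton]
    cases b <;> simp only [h₀, h₁, ih, Bool.false_eq_true, if_true, if_false]

theorem alphaWord_symm_apply_of_fixed {g : Γ} (h₀ : α₀ g = g) (h₁ : α₁ g = g) (w : List Bool) :
    (alphaWord α₀ α₁ w).symm g = g := by
  rw [MulEquiv.symm_apply_eq, alphaWord_apply_of_fixed α₀ α₁ h₀ h₁]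

theorem fixed_of_alphaWord_append_eq {u : List Bool} {g : Γ}
    (h₁ : alphaWord α₀ α₁ (u ++ [true]) g = alphaWord α₀ α₁ (u ++ [false]) g)
    (h₂ : alphaWord α₀ α₁ (u ++ [true]) g = alphaWord α₀ α₁ (u ++ [false, false]) g) :
    α₀ g = g ∧ α₁ g = g := by
  simp only [alphaWord_append, MulEquiv.trans_apply] at h₁ h₂
  generalize hh : alphaWord α₀ α₁ u g = h at h₁ h₂
  have e₁ : α₁ h = α₀ h := h₁
  have e₂ : α₁ h = α₀ (α₀ h) := h₂
  have f₀ : α₀ h = h := α₀.injective (e₂.symm.trans e₁)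
  have f₁ : α₁ h = h := e₁.trans f₀
  obtain rfl : g = h :=
    (alphaWord α₀ α₁ u).injective (hh.trans (alphaWord_apply_of_fixed α₀ α₁ f₀ f₁ u).symm)
  exact ⟨f₀, f₁⟩

theorem alphaWord_symm_apply_congr {v : Cantor ≃ₜ Cantor} {x : Cantor} {m₁ w₁ m₂ w₂ : List Bool}
    (hx₁ : x ∈ cyl m₁) (hv₁ : ∀ z, v (cat m₁ z) = cat w₁ z)
    (hx₂ : x ∈ cyl m₂) (hv₂ : ∀ z, v (cat m₂ z) = cat w₂ z) (g : Γ) :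
    (alphaWord α₀ α₁ w₁).symm (alphaWord α₀ α₁ m₁ g)
      = (alphaWord α₀ α₁ w₂).symm (alphaWord α₀ α₁ m₂ g) := by
  wlog hle : m₁.length ≤ m₂.length generalizing m₁ w₁ m₂ w₂
  · exact (this hx₂ hv₂ hx₁ hv₁ (by omega)).symm
  obtain ⟨s, rfl⟩ := isPrefix_of_mem_cyl hx₁ hx₂ hle
  obtain rfl : w₂ = w₁ ++ s :=
    eq_of_forall_cat_eq fun z => by rw [← hv₂, ← cat_append, hv₁, cat_append]
  rw [alphaWord_append, alphaWord_append, MulEquiv.trans_apply, MulEquiv.symm_trans_apply,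
    MulEquiv.symm_apply_apply]

theorem tauEquiv_apply {v : Cantor ≃ₜ Cantor} {x : Cantor} {m w : List Bool} (hx : x ∈ cyl m)
    (hv : ∀ z, v (cat m z) = cat w z) (g : Γ) :
    tauEquiv α₀ α₁ v x g = (alphaWord α₀ α₁ w).symm (alphaWord α₀ α₁ m g) := by
  have h : ∃ p : List Bool × List Bool, x ∈ cyl p.1 ∧ ∀ z, v (cat p.1 z) = cat p.2 z :=
    ⟨(m, w), hx, hv⟩
  rw [tauEquiv, dif_pos h, MulEquiv.trans_apply]
  exact alphaWord_symm_apply_congr α₀ α₁ h.choose_spec.1 h.choose_spec.2 hx hv g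

theorem tauEquiv_apply_of_forall_cat_eq {v : Cantor ≃ₜ Cantor} {x : Cantor} {m : List Bool}
    (hx : x ∈ cyl m) (hv : ∀ z, v (cat m z) = cat m z) (g : Γ) : tauEquiv α₀ α₁ v x g = g := by
  rw [tauEquiv_apply α₀ α₁ hx hv, MulEquiv.symm_apply_apply]

theorem commute_permOf_iff (a : Cantor → Γ) (v : Cantor ≃ₜ Cantor) :
    Commute (permOf α₀ α₁ a (Homeomorph.refl Cantor)) (permOf α₀ α₁ (fun _ => (1 : Γ)) v)
      ↔ ∀ x, a (v x) = tauEquiv α₀ α₁ v x (a x) := by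
  have hτ (x : Cantor) (g : Γ) : tauEquiv α₀ α₁ (Homeomorph.refl Cantor) x g = g :=
    tauEquiv_apply_of_forall_cat_eq α₀ α₁ (m := []) (mem_cyl_iff.2 fun _ h => absurd h (Nat.not_lt_zero _))
      (fun _ => rfl) g
  rw [commute_iff_eq, Equiv.ext_iff]
  refine ⟨fun h x => ?_, fun h p => ?_⟩
  · simpa [permOf, hτ] using congrArg Prod.snd (h (x, 1))
  · simp [permOf, hτ, h]

end Twist

section Centralizer

variable {Γ : Type*} [Group Γ] (α₀ α₁ : Γ ≃* Γ)

/-- Since `π_v(a)(v x) = τ_{v,x}(a x)`, this says `π_v(a) = a` for every `v ∈ Fix_V(U)`. -/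
def IsInvariantUnderFix (U : Set Cantor) (a : Cantor → Γ) : Prop :=
  ∀ v : Cantor ≃ₜ Cantor, memV v → (∀ x ∈ U, v x = x) → ∀ x, a (v x) = tauEquiv α₀ α₁ v x (a x)

variable {α₀ α₁} {U : Set Cantor} {a : Cantor → Γ}

theorem IsInvariantUnderFix.alphaWord_apply_eq (ha : IsInvariantUnderFix α₀ α₁ U a)
    {m₁ m₂ : List Bool} (h₁₂ : Disjoint (cyl m₁) (cyl m₂)) (h₁ : Disjoint (cyl m₁) U)
    (h₂ : Disjoint (cyl m₂) U) (z : Cantor) :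
    alphaWord α₀ α₁ m₂ (a (cat m₂ z)) = alphaWord α₀ α₁ m₁ (a (cat m₁ z)) := by
  have hfix : ∀ x ∈ U, swapCylHomeo h₁₂ x = x := fun x hx =>
    swapCyl_of_notMem (Set.disjoint_right.1 h₁ hx) (Set.disjoint_right.1 h₂ hx)
  have h := ha _ (memV_swapCylHomeo h₁₂) hfix (cat m₁ z)
  rw [swapCylHomeo_apply, swapCyl_cat_left,
    tauEquiv_apply α₀ α₁ (cat_mem_cyl m₁ z) (swapCyl_cat_left m₁ m₂)] at h
  rw [h, MulEquiv.apply_symm_apply]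

theorem IsInvariantUnderFix.fixed_of_const_on_cyl (ha : IsInvariantUnderFix α₀ α₁ U a)
    {u : List Bool} {g : Γ} (hu : Disjoint (cyl u) U) (hg : ∀ y ∈ cyl u, a y = g) :
    α₀ g = g ∧ α₁ g = g := by
  have sub (s : List Bool) : cyl (u ++ s) ⊆ cyl u := cyl_subset_of_isPrefix (List.prefix_append u s)
  have swap (s t : List Bool) (hst : Disjoint (cyl (u ++ s)) (cyl (u ++ t))) :
      alphaWord α₀ α₁ (u ++ t) g = alphaWord α₀ α₁ (u ++ s) g := by
    have := ha.alphaWord_apply_eq hst (hu.mono_left (sub s)) (hu.mono_left (sub t)) zeroSeq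
    rwa [hg _ (sub s (cat_mem_cyl _ _)), hg _ (sub t (cat_mem_cyl _ _))] at this
  exact fixed_of_alphaWord_append_eq α₀ α₁ (swap [false] [true] (disjoint_cyl (by simp) (by simp)))
    (swap [false, false] [true] (disjoint_cyl (by simp) (by simp)))

theorem IsInvariantUnderFix.exists_eq_of_notMem (ha : IsInvariantUnderFix α₀ α₁ U a) {N : ℕ}
    (haN : DependsOnFirst N a) (hUN : DependsOnFirst N (· ∈ U)) :
    ∃ g : Γ, α₀ g = g ∧ α₁ g = g ∧ ∀ x, x ∉ U → a x = g := by
  have hdisj (x : Cantor) (hx : x ∉ U) : Disjoint (cyl (pref x N)) U :=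
    Set.disjoint_left.2 fun y hy hyU => hx (hUN.apply_eq_of_mem_cyl_pref hy ▸ hyU)
  have hconst (x : Cantor) : ∀ y ∈ cyl (pref x N), a y = a x :=
    fun _ => haN.apply_eq_of_mem_cyl_pref
  have hfixed (x : Cantor) (hx : x ∉ U) : α₀ (a x) = a x ∧ α₁ (a x) = a x :=
    ha.fixed_of_const_on_cyl (hdisj x hx) (hconst x)
  have heq (x : Cantor) (hx : x ∉ U) (y : Cantor) (hy : y ∉ U) : a x = a y := by
    by_cases hxy : pref x N = pref y N
    · exact hconst y x (hxy ▸ mem_cyl_pref_self x N)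
    have hne : ∀ {s t : List Bool}, s ≠ t → s.length = t.length → ¬ s <+: t :=
      fun hst hl hp => hst (hp.eq_of_length hl)
    have := ha.alphaWord_apply_eq (disjoint_cyl (hne hxy (by simp)) (hne (Ne.symm hxy) (by simp)))
      (hdisj x hx) (hdisj y hy) zeroSeq
    rwa [hconst x _ (cat_mem_cyl _ _), hconst y _ (cat_mem_cyl _ _),
      alphaWord_apply_of_fixed α₀ α₁ (hfixed x hx).1 (hfixed x hx).2,
      alphaWord_apply_of_fixed α₀ α₁ (hfixed y hy).1 (hfixed y hy).2, eq_comm] at this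
  by_cases hU : ∃ x₀, x₀ ∉ U
  · obtain ⟨x₀, hx₀⟩ := hU
    exact ⟨a x₀, (hfixed x₀ hx₀).1, (hfixed x₀ hx₀).2, fun x hx => heq x hx x₀ hx₀⟩
  · exact ⟨1, map_one _, map_one _, fun x hx => absurd ⟨x, hx⟩ hU⟩

theorem isInvariantUnderFix_of_eq_of_notMem (hU : ∀ x ∈ U, ∃ m, x ∈ cyl m ∧ cyl m ⊆ U) {g : Γ}
    (h₀ : α₀ g = g) (h₁ : α₁ g = g) (ha : ∀ x, x ∉ U → a x = g) :
    IsInvariantUnderFix α₀ α₁ U a := by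
  intro v hv hfix x
  by_cases hx : x ∈ U
  · obtain ⟨m, hxm, hmU⟩ := hU x hx
    rw [hfix x hx, tauEquiv_apply_of_forall_cat_eq α₀ α₁ hxm fun z => hfix _ (hmU (cat_mem_cyl m z))]
  · have hvx : v x ∉ U := fun hvx => hx (v.injective (hfix _ hvx) ▸ hvx)
    obtain ⟨m, w, y, rfl, hvm⟩ := hv x
    rw [ha _ hx, ha _ hvx, tauEquiv_apply α₀ α₁ (cat_mem_cyl m y) hvm,
      alphaWord_apply_of_fixed α₀ α₁ h₀ h₁, alphaWord_symm_apply_of_fixed α₀ α₁ h₀ h₁]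

end Centralizer

/-- In the twisted fraction group `LΓ ⋊ V` of `(Γ, α₀, α₁)` (with
`α₀, α₁` automorphisms), for every finite union `I` of standard dyadic intervals, the set
of `a ∈ LΓ` commuting with every element of `Fix_V(I)` equals `L_I Γ · D_{I^c}(Γ^α)`,
i.e. the maps in `LΓ` which are constant on the complement of `I` with value fixed by
both `α₀` and `α₁`. -/
theorem centralizer_of_fix (Γ : Type*) [Group Γ] (α₀ α₁ : Γ ≃* Γ)
    (P : Finset (List Bool)) :
    {a : Cantor → Γ | IsLC a ∧ ∀ v : Cantor ≃ₜ Cantor, memV v →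
        (∀ x ∈ ⋃ w ∈ P, cyl w, v x = x) →
        Commute (permOf α₀ α₁ a (Homeomorph.refl Cantor))
          (permOf α₀ α₁ (fun _ => (1 : Γ)) v)} =
    {a : Cantor → Γ | IsLC a ∧ ∃ g : Γ, α₀ g = g ∧ α₁ g = g ∧
        ∀ x, x ∉ (⋃ w ∈ P, cyl w) → a x = g} := by
  ext a
  simp only [Set.mem_ofPred_eq, commute_permOf_iff]
  refine and_congr_right fun hLC => ⟨fun ha => ?_, fun ⟨g, h₀, h₁, ha⟩ => ?_⟩
  · obtain ⟨N, haN⟩ := hLC.exists_dependsOnFirst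
    exact IsInvariantUnderFix.exists_eq_of_notMem ha (haN.mono (le_max_left N (P.sup List.length)))
      (dependsOnFirst_mem_biUnion_cyl fun w hw =>
        (Finset.le_sup (f := List.length) hw).trans (le_max_right _ _))
  · refine isInvariantUnderFix_of_eq_of_notMem (fun x hx => ?_) h₀ h₁ ha
    obtain ⟨w, hw, hxw⟩ := Set.mem_iUnion₂.1 hx
    exact ⟨w, hxw, Set.subset_biUnion_of_mem (u := cyl) hw⟩
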